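/- Let a > b > 0. Define on ℝ⁹ the Poisson bracket determined by {Mᵢ,Mⱼ}=ε_{ijk}M_k, {Mᵢ,αⱼ}=ε_{ijk}α_k, {Mᵢ,βⱼ}=ε_{ijk}β_k, {αᵢ,αⱼ}={αᵢ,βⱼ}={βᵢ,βⱼ}=0, where M₁=2ω₁, M₂=2ω₂, M₃=ω₃, extended to smooth functions as a biderivation. Then the three functions H = ω₁²+ω₂²+½ω₃²−α₁−β₂, K = (ω₁²−ω₂²+α₁−β₂)² + (2ω₁ω₂+α₂+β₁)², and G = (ω₁α₁+ω₂α₂+½α₃ω₃)² + (ω₁β₁+ω₂β₂+½β₃ω₃)² + ω₃[(α₂β₃−α₃β₂)ω₁+(α₃β₁−α₁β₃)ω₂+½(α₁β₂−α₂β₁)ω₃] − α₁b² − β₂a² are pairwise in involution at every point of the constraint set P⁶ = {|α|²=a², |β|²=b², α·β=0}: {H,K}(x) = {H,G}(x) = {K,G}(x) = 0 for all x ∈ P⁶. -/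

import Mathlib

noncomputable section
set_option maxHeartbeats 4000000

/-- The energy integral `H = ω₁²+ω₂²+½ω₃²−α₁−β₂`. -/
def kovH (x : Fin 9 → ℝ) : ℝ := (x 0)^2 + (x 1)^2 + (x 2)^2 / 2 - x 3 - x 7

/-- The Kovalevskaya-type integral `K = (ω₁²−ω₂²+α₁−β₂)² + (2ω₁ω₂+α₂+β₁)²`. -/
def kovK (x : Fin 9 → ℝ) : ℝ :=
  ((x 0)^2 - (x 1)^2 + x 3 - x 7)^2 + (2 * x 0 * x 1 + x 4 + x 6)^2

/-- The integral `G` of the Kovalevskaya top in a double field. -/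
def kovG (a b : ℝ) (x : Fin 9 → ℝ) : ℝ :=
  (x 0 * x 3 + x 1 * x 4 + x 5 * x 2 / 2)^2
  + (x 0 * x 6 + x 1 * x 7 + x 8 * x 2 / 2)^2
  + x 2 * ((x 4 * x 8 - x 5 * x 7) * x 0 + (x 5 * x 6 - x 3 * x 8) * x 1
      + (x 3 * x 7 - x 4 * x 6) * x 2 / 2)
  - x 3 * b^2 - x 7 * a^2

/-- The Poisson tensor on `ℝ⁹` in the coordinates `(ω,α,β)`, obtained from
`{Mᵢ,Mⱼ}=ε_{ijk}M_k`, `{Mᵢ,αⱼ}=ε_{ijk}α_k`, `{Mᵢ,βⱼ}=ε_{ijk}β_k`,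
`{αᵢ,αⱼ}={αᵢ,βⱼ}={βᵢ,βⱼ}=0` with `M₁=2ω₁, M₂=2ω₂, M₃=ω₃`. -/
def kovP (x : Fin 9 → ℝ) : Fin 9 → Fin 9 → ℝ :=
  ![![0, x 2 / 4, -(x 1), 0, x 5 / 2, -(x 4) / 2, 0, x 8 / 2, -(x 7) / 2],
    ![-(x 2) / 4, 0, x 0, -(x 5) / 2, 0, x 3 / 2, -(x 8) / 2, 0, x 6 / 2],
    ![x 1, -(x 0), 0, x 4, -(x 3), 0, x 7, -(x 6), 0],
    ![0, x 5 / 2, -(x 4), 0, 0, 0, 0, 0, 0],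
    ![-(x 5) / 2, 0, x 3, 0, 0, 0, 0, 0, 0],
    ![x 4 / 2, -(x 3) / 2, 0, 0, 0, 0, 0, 0, 0],
    ![0, x 8 / 2, -(x 7), 0, 0, 0, 0, 0, 0],
    ![-(x 8) / 2, 0, x 6, 0, 0, 0, 0, 0, 0],
    ![x 7 / 2, -(x 6) / 2, 0, 0, 0, 0, 0, 0, 0]]

/-- The Poisson bracket of two functions on `ℝ⁹`, extended as a biderivation:
`{f,g}(x) = Σᵢⱼ Pᵢⱼ(x) ∂ᵢf(x) ∂ⱼg(x)`. -/
def kovBracket (f g : (Fin 9 → ℝ) → ℝ) (x : Fin 9 → ℝ) : ℝ :=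
  ∑ i : Fin 9, ∑ j : Fin 9,
    kovP x i j * fderiv ℝ f x (Pi.single i 1) * fderiv ℝ g x (Pi.single j 1)

private lemma sq' {E : Type*} [NormedAddCommGroup E] [NormedSpace ℝ E]
    {f : E → ℝ} {f' : E →L[ℝ] ℝ} {x : E} (hf : HasFDerivAt f f' x) :
    HasFDerivAt (fun y => f y ^ 2) ((2 * f x) • f') x := by
  simpa [pow_two, two_mul, add_smul] using hf.fun_mul hf

private lemma divc' {E : Type*} [NormedAddCommGroup E] [NormedSpace ℝ E]
    {f : E → ℝ} {f' : E →L[ℝ] ℝ} {x : E} (c : ℝ) (hf : HasFDerivAt f f' x) :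
    HasFDerivAt (fun y => f y / c) (c⁻¹ • f') x := by
  simpa [div_eq_mul_inv] using hf.mul_const c⁻¹

/-- `H`, `K`, `G` are pairwise in involution at every point of the
constraint set `P⁶ = {|α|²=a², |β|²=b², α·β=0}`. -/
theorem integrals_in_involution (a b : ℝ) (hb : 0 < b) (hab : b < a)
    (x : Fin 9 → ℝ)
    (h1 : (x 3)^2 + (x 4)^2 + (x 5)^2 = a^2)
    (h2 : (x 6)^2 + (x 7)^2 + (x 8)^2 = b^2)
    (h3 : x 3 * x 6 + x 4 * x 7 + x 5 * x 8 = 0) :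
    kovBracket kovH kovK x = 0 ∧
    kovBracket kovH (kovG a b) x = 0 ∧
    kovBracket kovK (kovG a b) x = 0 := by

  have h : ∀ i : Fin 9, HasFDerivAt (fun y : Fin 9 → ℝ => y i)
      (ContinuousLinearMap.proj i : (Fin 9 → ℝ) →L[ℝ] ℝ) x :=
    fun i => hasFDerivAt_apply i x
  have hH := (((sq' (h 0)).add (sq' (h 1))).add (divc' 2 (sq' (h 2)))).sub (h 3)
    |>.sub (h 7)
  have hK := (sq' (((((sq' (h 0)).sub (sq' (h 1))).add (h 3)).sub (h 7)))).add
    (((((h 0).const_mul 2).mul (h 1)).add (h 4) |>.add (h 6)) |> sq')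
  have hg1 := (((h 0).mul (h 3)).add ((h 1).mul (h 4))).add (divc' 2 ((h 5).mul (h 2)))
  have hg2 := (((h 0).mul (h 6)).add ((h 1).mul (h 7))).add (divc' 2 ((h 8).mul (h 2)))
  have hg3 := ((((h 4).mul (h 8)).sub ((h 5).mul (h 7))).mul (h 0)).add
      ((((h 5).mul (h 6)).sub ((h 3).mul (h 8))).mul (h 1)) |>.add
      (divc' 2 ((((h 3).mul (h 7)).sub ((h 4).mul (h 6))).mul (h 2)))
  have hG := ((sq' hg1).add (sq' hg2)).add ((h 2).mul hg3)
    |>.sub ((h 3).mul_const (b^2)) |>.sub ((h 7).mul_const (a^2))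
  have dH : ∀ j : Fin 9, fderiv ℝ kovH x (Pi.single j 1) =
      (if j = 0 then 2*x 0 else if j = 1 then 2*x 1 else if j = 2 then 1*x 2 else if j = 3 then (-1) else if j = 4 then 0 else if j = 5 then 0 else if j = 6 then 0 else if j = 7 then (-1) else 0) := by
    have e := HasFDerivAt.fderiv (f := kovH) hH
    intro j
    rw [e]
    fin_cases j <;>
      simp [Pi.single_apply] <;>
      ring
  have dK : ∀ j : Fin 9, fderiv ℝ kovK x (Pi.single j 1) =
      (if j = 0 then 4*x 1*x 6 + 4*x 1*x 4 + (-4)*x 0*x 7 + 4*x 0*x 3 + 4*x 0*x 1*x 1 + 4*x 0*x 0*x 0 else if j = 1 then 4*x 1*x 7 + (-4)*x 1*x 3 + 4*x 1*x 1*x 1 + 4*x 0*x 6 + 4*x 0*x 4 + 4*x 0*x 0*x 1 else if j = 2 then 0 else if j = 3 then (-2)*x 7 + 2*x 3 + (-2)*x 1*x 1 + 2*x 0*x 0 else if j = 4 then 2*x 6 + 2*x 4 + 4*x 0*x 1 else if j = 5 then 0 else if j = 6 then 2*x 6 + 2*x 4 + 4*x 0*x 1 else if j = 7 then 2*x 7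 + (-2)*x 3 + 2*x 1*x 1 + (-2)*x 0*x 0 else 0) := by
    have e := HasFDerivAt.fderiv (f := kovK) hK
    intro j
    rw [e]
    fin_cases j <;>
      simp [Pi.single_apply] <;>
      ring
  have dG : ∀ j : Fin 9, fderiv ℝ (kovG a b) x (Pi.single j 1) =
      (if j = 0 then 1*x 2*x 6*x 8 + (-1)*x 2*x 5*x 7 + 1*x 2*x 4*x 8 + 1*x 2*x 3*x 5 + 2*x 1*x 6*x 7 + 2*x 1*x 3*x 4 + 2*x 0*x 6*x 6 + 2*x 0*x 3*x 3 else if j = 1 then 1*x 2*x 7*x 8 + 1*x 2*x 5*x 6 + 1*x 2*x 4*x 5 + (-1)*x 2*x 3*x 8 + 2*x 1*x 7*x 7 + 2*x 1*x 4*x 4 + 2*x 0*x 6*x 7 + 2*x 0*x 3*x 4 else if j = 2 then (1/2)*x 2*x 8*x 8 + (1/2)*x 2*x 5*x 5 + (-1)*x 2*x 4*x 6 + 1*x 2*x 3*x 7 + 1*x 1*x 7*x 8 + 1*x 1*x 5*x 6 + 1*x 1*x 4*x 5 + (-1)*x 1*x 3*x 8 + 1*x 0*x 6*x 8 + (-1)*x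 0*x 5*x 7 + 1*x 0*x 4*x 8 + 1*x 0*x 3*x 5 else if j = 3 then (-1)*b*b + (1/2)*x 2*x 2*x 7 + (-1)*x 1*x 2*x 8 + 1*x 0*x 2*x 5 + 2*x 0*x 1*x 4 + 2*x 0*x 0*x 3 else if j = 4 then (-1/2)*x 2*x 2*x 6 + 1*x 1*x 2*x 5 + 2*x 1*x 1*x 4 + 1*x 0*x 2*x 8 + 2*x 0*x 1*x 3 else if j = 5 then (1/2)*x 2*x 2*x 5 + 1*x 1*x 2*x 6 + 1*x 1*x 2*x 4 + (-1)*x 0*x 2*x 7 + 1*x 0*x 2*x 3 else if j = 6 then (-1/2)*x 2*x 2*x 4 + 1*x 1*x 2*x 5 + 1*x 0*x 2*x 8 + 2*x 0*x 1*x 7 + 2*x 0*x 0*x 6 else if j = 7 then (-1)*a*a + (1/2)*x 2*x 2*x 3 + 1*x 1*x 2*x 8 + 2*x 1*x 1*x 7 + (-1)*x 0*x 2*x 5 + 2*x 0*x 1*x 6 else (1/2)*x 2*x 2*x 8 + 1*x 1*x 2*x 7 + (-1)*x 1*x 2*x 3 + 1*x 0*x 2*x 6 + 1*x 0*x 2*x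 4) := by
    have e := HasFDerivAt.fderiv (f := kovG a b) hG
    intro j
    rw [e]
    fin_cases j <;>
      simp [Pi.single_apply] <;>
      ring
  refine ⟨?_, ?_, ?_⟩
  · simp [kovBracket, dH, dK, kovP, Fin.sum_univ_succ, Finset.sum_empty,
      Fin.isValue, Matrix.cons_val_zero, Matrix.cons_val_one, Matrix.head_cons,
      Matrix.cons_val_succ, Fin.val_succ, show ((0:Fin 9):ℕ)=0 from rfl, show ((1:Fin 9):ℕ)=1 from rfl, show ((2:Fin 9):ℕ)=2 from rfl, show ((3:Fin 9):ℕ)=3 from rfl, show ((4:Fin 9):ℕ)=4 from rfl, show ((5:Fin 9):ℕ)=5 from rfl, show ((6:Fin 9):ℕ)=6 from rfl, show ((7:Fin 9):ℕ)=7 from rfl, show ((8:Fin 9):ℕ)=8 from rfl]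
    ring
  · simp [kovBracket, dH, dG, kovP, Fin.sum_univ_succ, Finset.sum_empty,
      Fin.isValue, Matrix.cons_val_zero, Matrix.cons_val_one, Matrix.head_cons,
      Matrix.cons_val_succ, Fin.val_succ, show ((0:Fin 9):ℕ)=0 from rfl, show ((1:Fin 9):ℕ)=1 from rfl, show ((2:Fin 9):ℕ)=2 from rfl, show ((3:Fin 9):ℕ)=3 from rfl, show ((4:Fin 9):ℕ)=4 from rfl, show ((5:Fin 9):ℕ)=5 from rfl, show ((6:Fin 9):ℕ)=6 from rfl, show ((7:Fin 9):ℕ)=7 from rfl, show ((8:Fin 9):ℕ)=8 from rfl]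
    linear_combination ((-1)*x 2*x 6 + 1*x 0*x 8) * h1 + (1*x 2*x 4 + (-1)*x 1*x 5) * h2 + ((-1)*x 2*x 7 + 1*x 2*x 3 + 1*x 1*x 8 + (-1)*x 0*x 5) * h3
  · simp [kovBracket, dK, dG, kovP, Fin.sum_univ_succ, Finset.sum_empty,
      Fin.isValue, Matrix.cons_val_zero, Matrix.cons_val_one, Matrix.head_cons,
      Matrix.cons_val_succ, Fin.val_succ, show ((0:Fin 9):ℕ)=0 from rfl, show ((1:Fin 9):ℕ)=1 from rfl, show ((2:Fin 9):ℕ)=2 from rfl, show ((3:Fin 9):ℕ)=3 from rfl, show ((4:Fin 9):ℕ)=4 from rfl, show ((5:Fin 9):ℕ)=5 from rfl, show ((6:Fin 9):ℕ)=6 from rfl, show ((7:Fin 9):ℕ)=7 from rfl, show ((8:Fin 9):ℕ)=8 from rfl]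
    linear_combination (2*x 1*x 6*x 8 + 2*x 1*x 4*x 8 + (-2)*x 0*x 7*x 8 + 2*x 0*x 3*x 8 + 2*x 0*x 1*x 1*x 8 + 2*x 0*x 0*x 0*x 8) * h1 + ((-2)*x 1*x 5*x 7 + 2*x 1*x 3*x 5 + (-2)*x 1*x 1*x 1*x 5 + (-2)*x 0*x 5*x 6 + (-2)*x 0*x 4*x 5 + (-2)*x 0*x 0*x 1*x 5) * h2 + (2*x 1*x 7*x 8 + (-2)*x 1*x 5*x 6 + (-2)*x 1*x 4*x 5 + (-2)*x 1*x 3*x 8 + 2*x 1*x 1*x 1*x 8 + 2*x 0*x 6*x 8 + 2*x 0*x 5*x 7 + 2*x 0*x 4*x 8 + (-2)*x 0*x 3*x 5 + (-2)*x 0*x 1*x 1*x 5 + 2*x 0*x 0*x 1*x 8 + (-2)*x 0*x 0*x 0*x 5) * h3
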